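/- In a meshed graph G, a connected induced subgraph H is geodesically convex if and only if it is locally convex (i.e., whenever x, y ∈ V(H) with d_G(x,y) = 2, we have I(x,y) ⊆ V(H)). -/

import Mathlib

variable {V : Type*}

def interval (G : SimpleGraph V) (u v : V) : Set V :=
  {x | G.dist u x + G.dist x v = G.dist u v}

def GeoConvex (G : SimpleGraph V) (X : Set V) : Prop :=
  ∀ u ∈ X, ∀ v ∈ X, interval G u v ⊆ X

def Meshed (G : SimpleGraph V) : Prop :=
  ∀ u v w : V, G.dist v w = 2 →
    ∃ x, G.Adj v x ∧ G.Adj w x ∧ 2 * G.dist u x ≤ G.dist u v + G.dist u w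

/-!
Call the distance to a base point `u` the level. Meshed graphs satisfy the triangle condition
(adjacent vertices at level `j + 1` have a common neighbour at level `j`) and, more generally, a
vertex `x` at level `j + 1` has a neighbour at level `j` within distance 2 of any `w` at level
`j + 1` with `d(x, w) ≤ 2`.

Let `S` be locally convex with `G[S]` connected and fix `u ∈ S`. Induction on the distance in
`G[S]` shows that every `v ∈ S \ {u}` has a neighbour `w ∈ S` one level lower. Then `I(u, v) ⊆ S`
is proved by induction on `d(u, v)`: a neighbour `x` of `v` one level lower is pushed down to a
neighbour `g` near `w`; the meshed condition and the induction hypothesis put `g` in `S`, and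
`x ∈ I(g, v) ⊆ S` by local convexity. Every `z ∈ I(u, v) \ {v}` lies in `I(u, x)` for such an `x`.
-/

def LocallyConvex (G : SimpleGraph V) (S : Set V) : Prop :=
  ∀ x ∈ S, ∀ y ∈ S, G.dist x y = 2 → interval G x y ⊆ S

namespace SimpleGraph

variable {G : SimpleGraph V} {u v x y z : V}

lemma Adj.dist_le_add_one (h : G.Adj x y) (u : V) : G.dist u y ≤ G.dist u x + 1 := by
  simpa [dist_eq_one_iff_adj.mpr h] using h.reachable.dist_triangle_right u

lemma dist_le_two_of_adj_of_adj (hxy : G.Adj x y) (hyz : G.Adj y z) : G.dist x z ≤ 2 := by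
  simpa [dist_eq_one_iff_adj.mpr hxy] using hyz.dist_le_add_one x

lemma Connected.dist_eq_two (hc : G.Connected) (hne : x ≠ y) (hxy : ¬G.Adj x y)
    (h : G.dist x y ≤ 2) : G.dist x y = 2 := by
  have := hc.one_lt_dist_of_ne_of_not_adj hne hxy
  omega

lemma exists_adj_dist_add_one_eq (h : G.dist u v ≠ 0) :
    ∃ x, G.Adj v x ∧ G.dist u x + 1 = G.dist u v := by
  rw [dist_comm] at h
  obtain ⟨p, hp⟩ := exists_walk_of_dist_ne_zero h
  cases p with
  | nil => simp at h
  | cons hadj q =>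
    refine ⟨_, hadj, ?_⟩
    have hq := dist_le q
    have := hadj.symm.dist_le_add_one u
    rw [Walk.length_cons] at hp
    rw [dist_comm] at hq hp
    omega

end SimpleGraph

open SimpleGraph

namespace Meshed

variable {G : SimpleGraph V} {u x w : V}

theorem triangle_condition (hM : Meshed G) (hc : G.Connected) {j : ℕ} (hxw : G.Adj x w)
    (hx : G.dist u x = j + 1) (hw : G.dist u w = j + 1) :
    ∃ g, G.Adj x g ∧ G.Adj w g ∧ G.dist u g = j := by
  induction j generalizing x w with
  | zero =>
    exact ⟨u, (dist_eq_one_iff_adj.mp hx).symm, (dist_eq_one_iff_adj.mp hw).symm, dist_self⟩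
  | succ i IH =>
    obtain ⟨g, hxg, hg⟩ := exists_adj_dist_add_one_eq (by omega : G.dist u x ≠ 0)
    by_cases hwg : G.Adj w g
    · exact ⟨g, hxg, hwg, by omega⟩
    have hgw : G.dist g w = 2 := hc.dist_eq_two (by rintro rfl; omega) (fun h => hwg h.symm)
      (dist_le_two_of_adj_of_adj hxg.symm hxw)
    obtain ⟨q, hgq, hwq, hq₂⟩ := hM u g w hgw
    have hq : G.dist u q = i + 1 := by have := hwq.symm.dist_le_add_one u; omega
    by_cases hxq : G.Adj x q
    · exact ⟨q, hxq, hwq, hq⟩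
    have hqx : G.dist q x = 2 := hc.dist_eq_two (by rintro rfl; omega) (fun h => hxq h.symm)
      (dist_le_two_of_adj_of_adj hgq.symm hxg.symm)
    obtain ⟨r, hqr, hxr, hr₂⟩ := hM u q x hqx
    have hr : G.dist u r = i + 1 := by have := hxr.symm.dist_le_add_one u; omega
    by_cases hwr : G.Adj w r
    · exact ⟨r, hxr, hwr, hr⟩
    -- `q ~ r` one level down: the induction hypothesis gives `s` two levels below `x` and `w`,
    -- and the meshed condition based at `w` turns `s, x` into a common neighbour of `x` and `w`.
    obtain ⟨s, hqs, hrs, hs⟩ := IH hqr hq hr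
    have hsx : G.dist s x = 2 := by
      have := dist_le_two_of_adj_of_adj hrs.symm hxr.symm
      have : G.dist u x ≤ G.dist u s + G.dist s x := hc.dist_triangle
      omega
    have hsw : G.dist w s = 2 := by
      have := dist_le_two_of_adj_of_adj hwq hqs
      have : G.dist u w ≤ G.dist u s + G.dist s w := hc.dist_triangle
      have : G.dist s w = G.dist w s := dist_comm
      omega
    obtain ⟨c, hsc, hxc, hc₂⟩ := hM w s x hsx
    have hwc : G.Adj w c := by
      rw [dist_eq_one_iff_adj.mpr hxw.symm] at hc₂
      have hcw : c ≠ w := by rintro rfl; rw [dist_eq_one_iff_adj.mpr hsc.symm] at hsw; omega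
      have := hc.pos_dist_of_ne hcw.symm
      exact dist_eq_one_iff_adj.mp (by omega)
    refine ⟨c, hxc, hwc, ?_⟩
    have := hsc.dist_le_add_one u
    have := hxc.symm.dist_le_add_one u
    omega

theorem exists_adj_dist_eq_of_dist_le_two (hM : Meshed G) (hc : G.Connected) {j : ℕ}
    (hx : G.dist u x = j + 1) (hw : G.dist u w = j + 1) (hxw : G.dist x w ≤ 2) :
    ∃ g, G.Adj x g ∧ G.dist u g = j ∧ G.dist g w ≤ 2 := by
  by_cases hxw₀ : x = w
  · subst hxw₀
    obtain ⟨g, hxg, hg⟩ := exists_adj_dist_add_one_eq (by omega : G.dist u x ≠ 0)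
    exact ⟨g, hxg, by omega, (dist_eq_one_iff_adj.mpr hxg.symm).le.trans (by norm_num)⟩
  by_cases hxw₁ : G.Adj x w
  · obtain ⟨g, hxg, hwg, hg⟩ := hM.triangle_condition hc hxw₁ hx hw
    exact ⟨g, hxg, hg, (dist_eq_one_iff_adj.mpr hwg.symm).le.trans (by norm_num)⟩
  obtain ⟨y, hxy, hwy, hy⟩ := hM u x w (hc.dist_eq_two hxw₀ hxw₁ hxw)
  have hyw : G.dist y w ≤ 2 := (dist_eq_one_iff_adj.mpr hwy.symm).le.trans (by norm_num)
  have := hxy.symm.dist_le_add_one u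
  obtain hy | hy : G.dist u y = j ∨ G.dist u y = j + 1 := by omega
  · exact ⟨y, hxy, hy, hyw⟩
  obtain ⟨g, hxg, hyg, hg⟩ := hM.triangle_condition hc hxy hx hy
  exact ⟨g, hxg, hg, dist_le_two_of_adj_of_adj hyg.symm hwy.symm⟩

end Meshed

namespace LocallyConvex

variable {G : SimpleGraph V} {S : Set V}

lemma mem_of_adj_of_adj (hS : LocallyConvex G S) {a b y : V} (ha : a ∈ S) (hb : b ∈ S)
    (hab : G.dist a b = 2) (hay : G.Adj a y) (hyb : G.Adj y b) : y ∈ S :=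
  hS a ha b hb hab <| show G.dist a y + G.dist y b = G.dist a b by
    rw [dist_eq_one_iff_adj.mpr hay, dist_eq_one_iff_adj.mpr hyb, hab]

lemma exists_adj_adj (hS : LocallyConvex G S) (hM : Meshed G) {a b : S}
    (hab : G.dist a b = 2) (u : V) :
    ∃ y : S, G.Adj a y ∧ G.Adj b y ∧ 2 * G.dist u y ≤ G.dist u a + G.dist u b := by
  obtain ⟨y, hay, hby, hy⟩ := hM u a b hab
  exact ⟨⟨y, hS.mem_of_adj_of_adj a.2 b.2 hab hay hby.symm⟩, hay, hby, hy⟩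

lemma exists_adj_dist_add_one_eq_of_dist_le_two (hS : LocallyConvex G S) (hM : Meshed G)
    (hc : G.Connected) {u v w : S} (hwv : G.dist w v ≤ 2)
    (hw : G.dist u w + 1 = G.dist u v) :
    ∃ z : S, G.Adj v z ∧ G.dist u z + 1 = G.dist u v ∧
      (G.induce S).dist u z ≤ (G.induce S).dist u w + 1 := by
  by_cases hadj : G.Adj w v
  · exact ⟨w, hadj.symm, hw, by omega⟩
  have hne : (w : V) ≠ v := fun h => by rw [h] at hw; omega
  obtain ⟨z, hwz, hvz, hz⟩ := hS.exists_adj_adj hM (hc.dist_eq_two hne hadj hwv) u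
  have := hvz.symm.dist_le_add_one u
  exact ⟨z, hvz, by omega, Adj.dist_le_add_one (G := G.induce S) hwz u⟩

theorem exists_adj_dist_add_one_eq (hS : LocallyConvex G S) (hM : Meshed G) (hc : G.Connected)
    (hconn : (G.induce S).Connected) {u v : S} (huv : u ≠ v) :
    ∃ w : S, G.Adj v w ∧ G.dist u w + 1 = G.dist u v ∧
      (G.induce S).dist u w < (G.induce S).dist u v := by
  induction hn : (G.induce S).dist u v using Nat.strong_induction_on generalizing v with
  | _ n IH =>
  have level_ne {y : S} (h : G.dist u y ≠ 0) : u ≠ y := by rintro rfl; simp at h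
  -- A neighbour `y` of `v` on the same level but closer to `u` in `G[S]` has a lower neighbour
  -- by induction, and one meshed step moves it next to `v`.
  have of_peer (y : S) (hvy : G.Adj v y) (hy : G.dist u y = G.dist u v)
      (hyn : (G.induce S).dist u y < n) :
      ∃ w : S, G.Adj v w ∧ G.dist u w + 1 = G.dist u v ∧ (G.induce S).dist u w < n := by
    have hv0 : G.dist u v ≠ 0 := (hc.pos_dist_of_ne (Subtype.coe_ne_coe.mpr huv)).ne'
    obtain ⟨w, hyw, hw, hwn⟩ := IH _ hyn (level_ne (hy ▸ hv0)) rfl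
    obtain ⟨z, hvz, hz, hzn⟩ := hS.exists_adj_dist_add_one_eq_of_dist_le_two hM hc
      (u := u) (dist_le_two_of_adj_of_adj hyw.symm hvy.symm) (by omega)
    exact ⟨z, hvz, hz, by omega⟩
  obtain ⟨w₁, hvw₁, hw₁⟩ := SimpleGraph.exists_adj_dist_add_one_eq
    (hconn.pos_dist_of_ne huv).ne'
  have hvw₁ : G.Adj v w₁ := hvw₁
  have := hvw₁.dist_le_add_one u
  have := hvw₁.symm.dist_le_add_one u
  obtain hd | hd | hd : G.dist u w₁ + 1 = G.dist u v ∨ G.dist u w₁ = G.dist u v ∨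
      G.dist u w₁ = G.dist u v + 1 := by omega
  · exact ⟨w₁, hvw₁, hd, by omega⟩
  · exact of_peer w₁ hvw₁ hd (by omega)
  obtain ⟨w₂, hw₁w₂, hw₂, hw₂n⟩ := IH _ (by omega) (v := w₁) (level_ne (by omega)) rfl
  have hw₂v : ¬G.Adj w₂ v := fun h => by
    have := Adj.dist_le_add_one (G := G.induce S) h u
    omega
  have hne : (w₂ : V) ≠ v := fun h => by
    rw [Subtype.coe_inj.mp h] at hw₂n
    omega
  obtain ⟨y, hw₂y, hvy, hy⟩ := hS.exists_adj_adj hM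
    (hc.dist_eq_two hne hw₂v (dist_le_two_of_adj_of_adj hw₁w₂.symm hvw₁.symm)) u
  have := Adj.dist_le_add_one (G := G.induce S) hw₂y u
  have := hvy.symm.dist_le_add_one u
  obtain hd | hd : G.dist u y + 1 = G.dist u v ∨ G.dist u y = G.dist u v := by omega
  · exact ⟨y, hvy, hd, by omega⟩
  · exact of_peer y hvy hd (by omega)

section IntervalInduction

variable {u v w : V} (hS : LocallyConvex G S) (hM : Meshed G) (hc : G.Connected)
  (hv : v ∈ S) (hw : w ∈ S) (hvw : G.Adj v w) (hwd : G.dist u w + 1 = G.dist u v)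
  (hI : ∀ y ∈ S, G.dist u y < G.dist u v → interval G u y ⊆ S)
include hS hM hc hv hw hvw hwd hI

theorem mem_of_dist_le_two {g : V} (hg : G.dist u g + 2 = G.dist u v) (hgv : G.dist g v = 2)
    (hgw : G.dist g w ≤ 2) : g ∈ S := by
  have hIw := hI w hw (by omega)
  by_cases hgw₁ : G.Adj g w
  · exact hIw <| show G.dist u g + G.dist g w = G.dist u w by
      rw [dist_eq_one_iff_adj.mpr hgw₁]; omega
  obtain ⟨m, hgm, hwm, hm₂⟩ := hM u g w (hc.dist_eq_two (by rintro rfl; omega) hgw₁ hgw)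
  have hm : G.dist u m = G.dist u g := by have := hwm.symm.dist_le_add_one u; omega
  have hmS : m ∈ S := hIw <| show G.dist u m + G.dist m w = G.dist u w by
    rw [dist_eq_one_iff_adj.mpr hwm.symm]; omega
  have hmv : G.dist m v = 2 := by
    have := dist_le_two_of_adj_of_adj hwm.symm hvw.symm
    have : G.dist u v ≤ G.dist u m + G.dist m v := hc.dist_triangle
    omega
  -- The meshed condition based at `m` lifts `g` to a vertex `t ∈ I(m, v) ⊆ S` one level up.
  obtain ⟨t, hgt, hvt, ht⟩ := hM m g v hgv
  have hmt : G.Adj m t := by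
    rw [dist_eq_one_iff_adj.mpr hgm.symm, hmv] at ht
    have htm : t ≠ m := by rintro rfl; rw [dist_eq_one_iff_adj.mpr hvt.symm] at hmv; omega
    have := hc.pos_dist_of_ne htm.symm
    exact dist_eq_one_iff_adj.mp (by omega)
  have htS : t ∈ S := hS.mem_of_adj_of_adj hmS hv hmv hmt hvt.symm
  have := hgt.dist_le_add_one u
  have := hvt.symm.dist_le_add_one u
  exact hI t htS (by omega) <| show G.dist u g + G.dist g t = G.dist u t by
    rw [dist_eq_one_iff_adj.mpr hgt]; omega

theorem mem_of_adj_of_dist_add_one_eq (hu : u ∈ S) {x : V} (hvx : G.Adj v x)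
    (hx : G.dist u x + 1 = G.dist u v) : x ∈ S := by
  obtain hx₀ | hx₀ := eq_or_ne (G.dist u x) 0
  · rwa [← hc.dist_eq_zero_iff.mp hx₀]
  obtain ⟨j, hj⟩ := Nat.exists_eq_succ_of_ne_zero hx₀
  obtain ⟨g, hxg, hg, hgw⟩ := hM.exists_adj_dist_eq_of_dist_le_two hc hj (by omega)
    (dist_le_two_of_adj_of_adj hvx.symm hvw)
  have hgv : G.dist g v = 2 := by
    have := dist_le_two_of_adj_of_adj hxg.symm hvx.symm
    have : G.dist u v ≤ G.dist u g + G.dist g v := hc.dist_triangle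
    omega
  exact hS.mem_of_adj_of_adj
    (mem_of_dist_le_two hS hM hc hv hw hvw hwd hI (by omega) hgv hgw) hv hgv hxg.symm hvx.symm

end IntervalInduction

theorem interval_subset (hS : LocallyConvex G S) (hM : Meshed G) (hc : G.Connected)
    (hconn : (G.induce S).Connected) {u v : V} (hu : u ∈ S) (hv : v ∈ S) :
    interval G u v ⊆ S := by
  induction hk : G.dist u v using Nat.strong_induction_on generalizing v with
  | _ k IH =>
  intro z (hz : G.dist u z + G.dist z v = G.dist u v)
  by_cases hzv : z = v
  · exact hzv ▸ hv
  obtain ⟨x, hvx, hx⟩ :=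
    SimpleGraph.exists_adj_dist_add_one_eq (hc.dist_eq_zero_iff.not.mpr hzv)
  have hxu : G.dist u x + 1 = G.dist u v := by
    have := hvx.symm.dist_le_add_one u
    have : G.dist u x ≤ G.dist u z + G.dist z x := hc.dist_triangle
    omega
  have huv : (⟨u, hu⟩ : S) ≠ ⟨v, hv⟩ := fun h => by
    rw [Subtype.mk.injEq] at h; subst h; simp at hxu
  obtain ⟨⟨w, hw⟩, hvw, hwd, -⟩ := hS.exists_adj_dist_add_one_eq hM hc hconn huv
  dsimp only at hvw hwd
  have hxS : x ∈ S := mem_of_adj_of_dist_add_one_eq hS hM hc hv hw hvw hwd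
    (fun y hy hyv => IH _ (by omega) hy rfl) hu hvx hxu
  exact IH _ (by omega) hxS rfl <| show G.dist u z + G.dist z x = G.dist u x by
    have : G.dist u x ≤ G.dist u z + G.dist z x := hc.dist_triangle
    omega

end LocallyConvex

theorem meshed_convex_iff_locallyConvex (G : SimpleGraph V) (hc : G.Connected)
    (hM : Meshed G) (S : Set V) (hS : (SimpleGraph.induce S G).Connected) :
    GeoConvex G S ↔
      ∀ x ∈ S, ∀ y ∈ S, G.dist x y = 2 → interval G x y ⊆ S :=
  ⟨fun hconv x hx y hy _ => hconv x hx y hy,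
    fun hLC _ hu _ hv => LocallyConvex.interval_subset hLC hM hc hS hu hv⟩
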